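/- Let a = (a_1, a_2, …) be a sequence in which each a_m is the reciprocal of an odd integer at least 3, let S_a ⊂ ℝ² be the associated carpet, and let C_a = S_a ∩ ({1/2} × [0,1]) be the vertical Cantor set separating the left and right halves of S_a. Then the one-dimensional Hausdorff measure of C_a is positive if and only if ∑_m a_m < ∞ (i.e. a ∈ ℓ¹). -/

import Mathlib

open MeasureTheory Metric Set Filter
open scoped ENNReal NNReal Topology

noncomputable section

abbrev Plane : Type := EuclideanSpace ℝ (Fin 2)

/-- `a` is a sequence of reciprocals of odd integers at least 3. -/
def GoodSeq (a : ℕ → ℝ) : Prop := ∀ m, ∃ k : ℕ, 1 ≤ k ∧ a m = ((2 * k + 1 : ℕ) : ℝ)⁻¹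

/-- `sA a m` is the side length `s_m = a_1 ⋯ a_m` of the level `m` squares. -/
def sA (a : ℕ → ℝ) (m : ℕ) : ℝ := ∏ j ∈ Finset.range m, a j

/-- number of subdivisions of each side at step `m+1` (an odd integer `≥ 3`). -/
def nA (a : ℕ → ℝ) (m : ℕ) : ℕ := ⌊(a m)⁻¹⌋₊

/-- the axis-parallel closed square with lower-left corner `c` and side `s`. -/
def csq (c : Plane) (s : ℝ) : Set Plane :=
  {p | p 0 ∈ Icc (c 0) (c 0 + s) ∧ p 1 ∈ Icc (c 1) (c 1 + s)}

/-- lower-left corners of the level `m` squares `𝒯_m` of the carpet construction. -/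
def corners (a : ℕ → ℝ) : ℕ → Set Plane
  | 0 => {p | p 0 = 0 ∧ p 1 = 0}
  | m + 1 =>
      {p | ∃ c ∈ corners a m, ∃ i j : ℕ,
        i < nA a m ∧ j < nA a m ∧ ¬(i = (nA a m - 1) / 2 ∧ j = (nA a m - 1) / 2) ∧
        p 0 = c 0 + i * sA a (m + 1) ∧ p 1 = c 1 + j * sA a (m + 1)}

/-- the level `m` precarpet `S_{a,m}`. -/
def precarpet (a : ℕ → ℝ) (m : ℕ) : Set Plane :=
  ⋃ c ∈ corners a m, csq c (sA a m)

/-- the carpet `S_a`. -/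
def carpet (a : ℕ → ℝ) : Set Plane := ⋂ m, precarpet a m

/-- The natural measure on the carpet: the Borel probability measure giving each level `m`
square of the construction mass `∏_{j≤m} (a_j⁻² - 1)⁻¹`. -/
def IsNaturalMeasure (a : ℕ → ℝ) (μ : Measure ↥(carpet a)) : Prop :=
  IsProbabilityMeasure μ ∧
    ∀ m : ℕ, ∀ c ∈ corners a m,
      μ (Subtype.val ⁻¹' csq c (sA a m)) =
        ENNReal.ofReal (∏ j ∈ Finset.range m, ((a j)⁻¹ ^ 2 - 1)⁻¹)

/-- `ρ` is an upper gradient of `u`: for every rectifiable curve (equivalently, every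
`1`-Lipschitz parametrized curve) `γ : [0, L] → X`, `|u(γ L) - u(γ 0)| ≤ ∫_γ ρ ds`. -/
def IsUpperGradient {X : Type*} [MetricSpace X] (u : X → ℝ) (ρ : X → ℝ≥0∞) : Prop :=
  ∀ L : ℝ, 0 ≤ L → ∀ γ : ℝ → X, LipschitzOnWith 1 γ (Icc 0 L) →
    ENNReal.ofReal |u (γ L) - u (γ 0)| ≤ ∫⁻ t in Icc 0 L, ρ (γ t)

/-- The metric measure space `(X, d, μ)` supports a `p`-Poincaré inequality. -/
def SupportsPoincare {X : Type*} [MetricSpace X] [MeasurableSpace X]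
    (μ : Measure X) (p : ℝ) : Prop :=
  ∃ C : ℝ, 1 ≤ C ∧ ∃ lam : ℝ, 1 ≤ lam ∧
    ∀ u : X → ℝ, Continuous u → ∀ ρ : X → ℝ≥0∞, Measurable ρ → IsUpperGradient u ρ →
      ∀ x : X, ∀ r : ℝ, 0 < r →
        (∫⁻ y in ball x r, ENNReal.ofReal |u y - ⨍ z in ball x r, u z ∂μ| ∂μ) / μ (ball x r) ≤
          ENNReal.ofReal (C * diam (ball x r)) *
            ((∫⁻ y in ball x (lam * r), ρ y ^ p ∂μ) / μ (ball x (lam * r))) ^ (1 / p)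

/-! Since every `a_m⁻¹` is odd, the squares of `T_m` meeting the line `x = 1/2` are exactly those
in the central column `[(1 - s_m)/2, (1 + s_m)/2] × [0, 1]`, and passing to `T_{m+1}` deletes
just the central subsquare of each of them. So the trace of `S_{a,m}` on the line is a union of
`∏_{j<m} (a_j⁻¹ - 1)` intervals of length `s_m` with disjoint interiors, of total length
`∏_{j<m} (1 - a_j)`, and by continuity of measure `H¹(C_a)` is the infimum of these products.
As `e^{-2x} ≤ 1 - x ≤ e^{-x}` on `[0, 1/2]`, that infimum is positive iff `∑ a_j < ∞`. -/

theorem Real.exp_neg_two_mul_le_one_sub {x : ℝ} (hx₀ : 0 ≤ x) (hx : x ≤ 1 / 2) :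
    Real.exp (-(2 * x)) ≤ 1 - x := by
  have hexp : 1 + 2 * x ≤ Real.exp (2 * x) := by linarith [Real.add_one_le_exp (2 * x)]
  have hinv : (1 + 2 * x)⁻¹ ≤ 1 - x := by
    rw [inv_le_iff_one_le_mul₀ (by linarith)]
    nlinarith
  calc Real.exp (-(2 * x)) = (Real.exp (2 * x))⁻¹ := Real.exp_neg _
    _ ≤ (1 + 2 * x)⁻¹ := inv_anti₀ (by linarith) hexp
    _ ≤ 1 - x := hinv

section InfiniteProduct

variable {x : ℕ → ℝ}

theorem summable_of_iInf_prod_one_sub_pos (hx₀ : ∀ j, 0 ≤ x j) (hx₁ : ∀ j, x j ≤ 1)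
    (hpos : 0 < ⨅ m, ∏ j ∈ Finset.range m, (1 - x j)) : Summable x := by
  set L := ⨅ m, ∏ j ∈ Finset.range m, (1 - x j)
  have hbdd : BddBelow (Set.range fun m => ∏ j ∈ Finset.range m, (1 - x j)) :=
    ⟨0, by
      rintro _ ⟨m, rfl⟩
      exact Finset.prod_nonneg fun j _ => sub_nonneg.2 (hx₁ j)⟩
  refine summable_of_sum_range_le (c := -Real.log L) hx₀ fun n => ?_
  have hprod : ∏ j ∈ Finset.range n, (1 - x j) ≤ Real.exp (-∑ j ∈ Finset.range n, x j) := by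
    rw [← Finset.sum_neg_distrib, Real.exp_sum]
    exact Finset.prod_le_prod (fun j _ => sub_nonneg.2 (hx₁ j))
      fun j _ => by linarith [Real.add_one_le_exp (-x j)]
  have := Real.log_le_log hpos ((ciInf_le hbdd n).trans hprod)
  rw [Real.log_exp] at this
  linarith

theorem iInf_prod_one_sub_pos_of_summable (hx₀ : ∀ j, 0 ≤ x j) (hx₁ : ∀ j, x j ≤ 1 / 2)
    (hx : Summable x) : 0 < ⨅ m, ∏ j ∈ Finset.range m, (1 - x j) := by
  refine (Real.exp_pos (-(2 * ∑' j, x j))).trans_le (le_ciInf fun m => ?_)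
  calc Real.exp (-(2 * ∑' j, x j)) ≤ Real.exp (-(2 * ∑ j ∈ Finset.range m, x j)) := by
        gcongr
        exact hx.sum_le_tsum _ fun j _ => hx₀ j
    _ = ∏ j ∈ Finset.range m, Real.exp (-(2 * x j)) := by
        rw [← Real.exp_sum, Finset.mul_sum, Finset.sum_neg_distrib]
    _ ≤ ∏ j ∈ Finset.range m, (1 - x j) :=
        Finset.prod_le_prod (fun j _ => (Real.exp_pos _).le)
          fun j _ => Real.exp_neg_two_mul_le_one_sub (hx₀ j) (hx₁ j)

theorem iInf_prod_one_sub_pos_iff (hx₀ : ∀ j, 0 ≤ x j) (hx₁ : ∀ j, x j ≤ 1 / 2) :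
    0 < ⨅ m, ∏ j ∈ Finset.range m, (1 - x j) ↔ Summable x :=
  ⟨summable_of_iInf_prod_one_sub_pos hx₀ fun j => (hx₁ j).trans (by norm_num),
    iInf_prod_one_sub_pos_of_summable hx₀ hx₁⟩

end InfiniteProduct

theorem Real.volume_biUnion_Icc_natCast_mul (K : Finset ℕ) {s : ℝ} (hs : 0 ≤ s) :
    volume (⋃ k ∈ K, Icc (k * s) ((k + 1) * s)) = K.card * ENNReal.ofReal s := by
  have hdisj : (K : Set ℕ).Pairwise
      (Function.onFun (AEDisjoint volume) fun k : ℕ => Icc (k * s) ((k + 1) * s)) := by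
    have key : ∀ k l : ℕ, k < l →
        AEDisjoint volume (Icc (k * s) ((k + 1) * s)) (Icc (l * s) ((l + 1) * s)) := by
      intro k l hkl
      have hkl' : (k : ℝ) + 1 ≤ l := by exact_mod_cast hkl
      have hsub : Icc (k * s) ((k + 1) * s) ∩ Icc (l * s) ((l + 1) * s) ⊆
          Icc (l * s) ((k + 1) * s) := fun y hy => ⟨hy.2.1, hy.1.2⟩
      refine measure_mono_null hsub ?_
      rw [Real.volume_Icc, ENNReal.ofReal_eq_zero]
      nlinarith
    intro k _ l _ hne
    rcases hne.lt_or_gt with h | h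
    · exact key k l h
    · exact (key l k h).symm
  rw [measure_biUnion_finset₀ hdisj fun _ _ => measurableSet_Icc.nullMeasurableSet]
  simp_rw [Real.volume_Icc, show ∀ k : ℝ, (k + 1) * s - k * s = s from fun k => by ring]
  rw [Finset.sum_const, nsmul_eq_mul]

theorem Nat.injOn_mul_add {n : ℕ} :
    Set.InjOn (fun p : ℕ × ℕ => p.1 * n + p.2) {p | p.2 < n} := by
  rintro ⟨k₁, j₁⟩ (h₁ : j₁ < n) ⟨k₂, j₂⟩ (h₂ : j₂ < n) (h : k₁ * n + j₁ = k₂ * n + j₂)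
  have hj : j₁ = j₂ := by
    simpa [Nat.mul_add_mod_of_lt h₁, Nat.mul_add_mod_of_lt h₂] using congrArg (· % n) h
  subst hj
  simp only [Prod.mk.injEq, and_true]
  exact Nat.eq_of_mul_eq_mul_right (by omega) (Nat.add_right_cancel h)

theorem Nat.eq_of_half_odd_mul_mem_Icc {s : ℝ} (hs : 0 < s) {i k : ℕ}
    (h : (2 * k + 1) * s / 2 ∈ Icc (i * s) ((i + 1) * s)) : i = k := by
  have h₁ : ((2 * i : ℕ) : ℝ) ≤ (2 * k + 1 : ℕ) :=
    le_of_mul_le_mul_right (by push_cast; linarith [h.1]) hs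
  have h₂ : ((2 * k + 1 : ℕ) : ℝ) ≤ (2 * i + 2 : ℕ) :=
    le_of_mul_le_mul_right (by push_cast; linarith [h.2]) hs
  norm_cast at h₁ h₂
  omega

namespace GoodSeq

variable {a : ℕ → ℝ}

theorem nA_eq (ha : GoodSeq a) (m : ℕ) : ∃ k, 1 ≤ k ∧ nA a m = 2 * k + 1 := by
  obtain ⟨k, hk, ham⟩ := ha m
  exact ⟨k, hk, by rw [nA, ham, inv_inv, Nat.floor_natCast]⟩

theorem natCast_nA_mul (ha : GoodSeq a) (m : ℕ) : (nA a m : ℝ) * a m = 1 := by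
  obtain ⟨k, -, ham⟩ := ha m
  rw [nA, ham, inv_inv, Nat.floor_natCast]
  exact mul_inv_cancel₀ (by positivity)

theorem pos (ha : GoodSeq a) (m : ℕ) : 0 < a m := by
  obtain ⟨k, -, ham⟩ := ha m
  rw [ham]
  positivity

theorem le_one_third (ha : GoodSeq a) (m : ℕ) : a m ≤ 1 / 3 := by
  obtain ⟨k, hk, hn⟩ := ha.nA_eq m
  have h3 : (3 : ℝ) ≤ nA a m := by exact_mod_cast (by omega : 3 ≤ nA a m)
  nlinarith [ha.natCast_nA_mul m, ha.pos m]

theorem sA_pos (ha : GoodSeq a) (m : ℕ) : 0 < sA a m :=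
  Finset.prod_pos fun j _ => ha.pos j

theorem natCast_nA_mul_sA_succ (ha : GoodSeq a) (m : ℕ) :
    (nA a m : ℝ) * sA a (m + 1) = sA a m := by
  rw [sA, Finset.prod_range_succ, mul_left_comm, ha.natCast_nA_mul, mul_one, sA]

end GoodSeq

/-- Row indices `k` of the squares `[(1 - s_m)/2, (1 + s_m)/2] × [k s_m, (k + 1) s_m]` of `T_m`. -/
def centralRows (a : ℕ → ℝ) : ℕ → Finset ℕ
  | 0 => {0}
  | m + 1 =>
      (centralRows a m ×ˢ (Finset.range (nA a m)).erase ((nA a m - 1) / 2)).image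
        fun p => p.1 * nA a m + p.2

def centralTrace (a : ℕ → ℝ) (m : ℕ) : Set ℝ :=
  ⋃ k ∈ centralRows a m, Icc (k * sA a m) ((k + 1) * sA a m)

section CentralTrace

variable {a : ℕ → ℝ}

theorem mem_centralRows_succ {m k : ℕ} :
    k ∈ centralRows a (m + 1) ↔ ∃ l ∈ centralRows a m, ∃ j < nA a m,
      j ≠ (nA a m - 1) / 2 ∧ k = l * nA a m + j := by
  simp only [centralRows, Finset.mem_image, Finset.mem_product, Finset.mem_erase,
    Finset.mem_range, Prod.exists]
  constructor
  · rintro ⟨l, j, ⟨hl, hjc, hj⟩, rfl⟩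
    exact ⟨l, hl, j, hj, hjc, rfl⟩
  · rintro ⟨l, hl, j, hj, hjc, rfl⟩
    exact ⟨l, j, ⟨hl, hjc, hj⟩, rfl⟩

theorem card_centralRows_succ (ha : GoodSeq a) (m : ℕ) :
    (centralRows a (m + 1)).card = (centralRows a m).card * (nA a m - 1) := by
  obtain ⟨k, -, hn⟩ := ha.nA_eq m
  rw [centralRows, Finset.card_image_of_injOn, Finset.card_product,
    Finset.card_erase_of_mem (Finset.mem_range.2 (by omega)), Finset.card_range]
  refine Nat.injOn_mul_add.mono fun p hp => ?_
  simp only [Finset.coe_product, Set.mem_prod, Finset.mem_coe, Finset.mem_erase,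
    Finset.mem_range] at hp
  exact hp.2.2

theorem card_centralRows_mul_sA (ha : GoodSeq a) (m : ℕ) :
    ((centralRows a m).card : ℝ) * sA a m = ∏ j ∈ Finset.range m, (1 - a j) := by
  induction m with
  | zero => simp [centralRows, sA]
  | succ m ih =>
    obtain ⟨k, -, hn⟩ := ha.nA_eq m
    rw [card_centralRows_succ ha, Finset.prod_range_succ, ← ih, sA, Finset.prod_range_succ, ← sA,
      Nat.cast_mul, Nat.cast_sub (by omega), Nat.cast_one]
    linear_combination (centralRows a m).card * sA a m * ha.natCast_nA_mul m

theorem centralTrace_zero : centralTrace a 0 = Icc 0 1 := by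
  simp [centralTrace, centralRows, sA]

theorem antitone_centralTrace (ha : GoodSeq a) : Antitone (centralTrace a) := by
  refine antitone_nat_of_succ_le fun m y hy => ?_
  simp only [centralTrace, mem_iUnion, exists_prop] at hy ⊢
  obtain ⟨k, hk, hyk⟩ := hy
  obtain ⟨l, hl, j, hj, -, rfl⟩ := mem_centralRows_succ.1 hk
  refine ⟨l, hl, Icc_subset_Icc ?_ ?_ hyk⟩
  all_goals
    have hj' : (j : ℝ) + 1 ≤ nA a m := by exact_mod_cast hj
    rw [← ha.natCast_nA_mul_sA_succ m]
    push_cast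
    nlinarith [ha.sA_pos (m + 1)]

theorem volume_centralTrace (ha : GoodSeq a) (m : ℕ) :
    volume (centralTrace a m) = ENNReal.ofReal (∏ j ∈ Finset.range m, (1 - a j)) := by
  rw [centralTrace, Real.volume_biUnion_Icc_natCast_mul _ (ha.sA_pos m).le,
    ← card_centralRows_mul_sA ha, ENNReal.ofReal_mul (by positivity), ENNReal.ofReal_natCast]

end CentralTrace

section Corners

variable {a : ℕ → ℝ}

theorem exists_mem_corners_of_mem_centralRows (ha : GoodSeq a) {m k : ℕ}
    (hk : k ∈ centralRows a m) :
    ∃ c ∈ corners a m, c 0 = (1 - sA a m) / 2 ∧ c 1 = k * sA a m := by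
  induction m generalizing k with
  | zero =>
    rw [centralRows, Finset.mem_singleton] at hk
    exact ⟨!₂[0, 0], ⟨rfl, rfl⟩, by simp [sA], by simp [hk]⟩
  | succ m ih =>
    obtain ⟨l, hl, j, hj, hjc, rfl⟩ := mem_centralRows_succ.1 hk
    obtain ⟨c, hc, hc₀, hc₁⟩ := ih hl
    obtain ⟨i, -, hn⟩ := ha.nA_eq m
    have hs := ha.natCast_nA_mul_sA_succ m
    refine ⟨!₂[c 0 + ((nA a m - 1) / 2 : ℕ) * sA a (m + 1), c 1 + j * sA a (m + 1)],
      ⟨c, hc, _, j, by omega, hj, fun h => hjc h.2, rfl, rfl⟩, ?_, ?_⟩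
    · rw [show (nA a m - 1) / 2 = i by omega]
      rw [hn] at hs
      simp only [Matrix.cons_val_zero, hc₀, ← hs]
      push_cast
      ring
    · simp only [Matrix.cons_val_one, Matrix.cons_val_zero, hc₁, ← hs]
      push_cast
      ring

theorem exists_mem_centralRows_of_mem_corners (ha : GoodSeq a) {m : ℕ} {c : Plane}
    (hc : c ∈ corners a m) (h : 1 / 2 ∈ Icc (c 0) (c 0 + sA a m)) :
    c 0 = (1 - sA a m) / 2 ∧ ∃ k ∈ centralRows a m, c 1 = k * sA a m := by
  induction m generalizing c with
  | zero =>
    obtain ⟨hc₀, hc₁⟩ := hc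
    exact ⟨by simp [hc₀, sA], 0, by simp [centralRows], by simp [hc₁]⟩
  | succ m ih =>
    obtain ⟨c', hc', i, j, hi, hj, hic, hc₀, hc₁⟩ := hc
    obtain ⟨k, -, hn⟩ := ha.nA_eq m
    have hs := ha.natCast_nA_mul_sA_succ m
    have hs' := ha.sA_pos (m + 1)
    have hi' : (i : ℝ) + 1 ≤ nA a m := by exact_mod_cast hi
    obtain ⟨hc'₀, l, hl, hc'₁⟩ := ih hc' ⟨by nlinarith [h.1], by nlinarith [h.2]⟩
    rw [hn] at hs
    have hik : i = k := Nat.eq_of_half_odd_mul_mem_Icc hs' (by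
      rw [hc₀, hc'₀] at h
      push_cast [← hs] at h ⊢
      constructor <;> linarith [h.1, h.2])
    subst hik
    refine ⟨by rw [hc₀, hc'₀, ← hs]; push_cast; ring, l * nA a m + j,
      mem_centralRows_succ.2 ⟨l, hl, j, hj, fun hjc => hic ⟨by omega, hjc⟩, rfl⟩, ?_⟩
    rw [hc₁, hc'₁, hn, ← hs]
    push_cast
    ring

end Corners

section CentralSlice

variable {a : ℕ → ℝ}

theorem mem_precarpet_iff_mem_centralTrace (ha : GoodSeq a) (m : ℕ) {p : Plane}
    (hp : p 0 = 1 / 2) : p ∈ precarpet a m ↔ p 1 ∈ centralTrace a m := by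
  simp only [precarpet, centralTrace, csq, mem_iUnion, mem_ofPred_eq, exists_prop]
  constructor
  · rintro ⟨c, hc, hp₀, hp₁⟩
    obtain ⟨-, k, hk, hc₁⟩ := exists_mem_centralRows_of_mem_corners ha hc (hp ▸ hp₀)
    refine ⟨k, hk, ?_⟩
    rwa [hc₁, ← add_one_mul] at hp₁
  · rintro ⟨k, hk, hp₁⟩
    obtain ⟨c, hc, hc₀, hc₁⟩ := exists_mem_corners_of_mem_centralRows ha hk
    have := ha.sA_pos m
    refine ⟨c, hc, ?_, ?_⟩
    · rw [hp, hc₀]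
      constructor <;> linarith
    · rwa [hc₁, ← add_one_mul]

theorem carpet_inter_centralLine_eq (ha : GoodSeq a) :
    carpet a ∩ {p : Plane | p 0 = 1 / 2 ∧ p 1 ∈ Icc (0 : ℝ) 1} =
      (fun y : ℝ => !₂[1 / 2, y]) '' ⋂ m, centralTrace a m := by
  ext p
  simp only [carpet, mem_inter_iff, mem_iInter, mem_ofPred_eq, mem_image]
  constructor
  · rintro ⟨hp, hp₀, -⟩
    refine ⟨p 1, fun m => (mem_precarpet_iff_mem_centralTrace ha m hp₀).1 (hp m), ?_⟩
    ext i
    fin_cases i <;> simp [hp₀]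
  · rintro ⟨y, hy, rfl⟩
    refine ⟨fun m => (mem_precarpet_iff_mem_centralTrace ha m rfl).2 (hy m), rfl, ?_⟩
    simpa [centralTrace_zero] using hy 0

theorem isometry_centralLine : Isometry fun y : ℝ => (!₂[1 / 2, y] : Plane) := by
  refine Isometry.of_dist_eq fun y z => ?_
  simp [EuclideanSpace.dist_eq, Fin.sum_univ_two, Real.dist_eq, Real.sqrt_sq_eq_abs]

theorem hausdorffMeasure_carpet_inter_centralLine (ha : GoodSeq a) :
    μH[1] (carpet a ∩ {p : Plane | p 0 = 1 / 2 ∧ p 1 ∈ Icc (0 : ℝ) 1}) =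
      ENNReal.ofReal (⨅ m, ∏ j ∈ Finset.range m, (1 - a j)) := by
  have hmeas (m : ℕ) : NullMeasurableSet (centralTrace a m) :=
    ((centralRows a m).measurableSet_biUnion fun _ _ => measurableSet_Icc).nullMeasurableSet
  rw [carpet_inter_centralLine_eq ha,
    isometry_centralLine.hausdorffMeasure_image (.inl zero_le_one), hausdorffMeasure_real,
    (antitone_centralTrace ha).measure_iInter hmeas ⟨0, by simp [centralTrace_zero]⟩,
    ENNReal.ofReal_iInf]
  simp_rw [volume_centralTrace ha]

end CentralSlice

/-- The central Cantor set `C_a = S_a ∩ ({1/2} × [0,1])` has positive length (one-dimensional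
Hausdorff measure) if and only if `a ∈ ℓ¹`. -/
theorem carpet_central_cantor_set_positive_length_iff (a : ℕ → ℝ) (ha : GoodSeq a) :
    0 < μH[(1 : ℝ)]
        (carpet a ∩ {p : Plane | p 0 = 1 / 2 ∧ p 1 ∈ Icc (0 : ℝ) 1}) ↔
      Summable a := by
  rw [hausdorffMeasure_carpet_inter_centralLine ha, ENNReal.ofReal_pos]
  exact iInf_prod_one_sub_pos_iff (fun j => (ha.pos j).le)
    fun j => (ha.le_one_third j).trans (by norm_num)

end
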